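/- arXiv:2504.11201 — 4 statements merged into one kernel-verified Lean document; each statement's English description precedes it below -/
import Mathlib

section
/- The space of ultrametrics is tropically convex: if u and v are ultrametrics on [m] (viewed as vectors in ℝ^{C(m,2)} indexed by pairs), then for any a, b ∈ ℝ, the coordinatewise maximum w = a ⊙ u ⊕ b ⊙ v, i.e., w(i,j) = max(a + u(i,j), b + v(i,j)), satisfies the three-point condition: max{w(i,j), w(i,k), w(j,k)} is attained at least twice for all distinct i,j,k. -/
/-- The maximum of `a, b, c` is attained at least twice. -/
def maxTwice {α : Type*} [LinearOrder α] (a b c : α) : Prop :=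
  (a = b ∧ c ≤ a) ∨ (a = c ∧ b ≤ a) ∨ (b = c ∧ a ≤ b)

lemma maxTwice_max (p q r s t z : ℝ) (h1 : maxTwice p q r) (h2 : maxTwice s t z) :
    maxTwice (max p s) (max q t) (max r z) := by
  unfold maxTwice at *
  rcases le_total p s with h|h <;> rcases le_total q t with h'|h' <;>
    rcases le_total r z with h''|h'' <;>
    rcases h1 with ⟨e1, l1⟩|⟨e1, l1⟩|⟨e1, l1⟩ <;> rcases h2 with ⟨e2, l2⟩|⟨e2, l2⟩|⟨e2, l2⟩ <;>
    simp only [max_eq_left, max_eq_right, h, h', h''] <;>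
    first
      | (left; exact ⟨by linarith, by linarith⟩)
      | (right; left; exact ⟨by linarith, by linarith⟩)
      | (right; right; exact ⟨by linarith, by linarith⟩)

/-- The space of ultrametrics is tropically convex: if `u` and `v` satisfy
the three-point condition then so does `w = a ⊙ u ⊕ b ⊙ v`, i.e.,
`w i j = max (a + u i j) (b + v i j)`. -/
theorem ultrametrics_tropically_convex {m : ℕ} (u v : Fin m → Fin m → ℝ)
    (hu : ∀ i j k : Fin m, i ≠ j → i ≠ k → j ≠ k → maxTwice (u i j) (u i k) (u j k))
    (hv : ∀ i j k : Fin m, i ≠ j → i ≠ k → j ≠ k → maxTwice (v i j) (v i k) (v j k))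
    (a b : ℝ) (w : Fin m → Fin m → ℝ)
    (hw : ∀ i j, w i j = max (a + u i j) (b + v i j)) :
    ∀ i j k : Fin m, i ≠ j → i ≠ k → j ≠ k → maxTwice (w i j) (w i k) (w j k) := by
  intro i j k hij hik hjk
  rw [hw, hw, hw]
  apply maxTwice_max
  · have h := hu i j k hij hik hjk
    unfold maxTwice at *
    rcases h with ⟨e, l⟩|⟨e, l⟩|⟨e, l⟩
    · left; constructor <;> linarith
    · right; left; constructor <;> linarith
    · right; right; constructor <;> linarith
  · have h := hv i j k hij hik hjk
    unfold maxTwice at *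
    rcases h with ⟨e, l⟩|⟨e, l⟩|⟨e, l⟩
    · left; constructor <;> linarith
    · right; left; constructor <;> linarith
    · right; right; constructor <;> linarith
end

section
/- The tropical projection onto a tropical polytope lands in the polytope and is a tropical nearest-point map: given v_1,...,v_s ∈ ℝ^e and x ∈ ℝ^e, define π(x) = ⊕_{k=1}^s λ_k ⊙ v_k where λ_k = min_j (x_j - v_k(j)). Then π(x) ∈ tconv(v_1,...,v_s) and d_tr(x, π(x)) ≤ d_tr(x, y) for every y ∈ tconv(v_1,...,v_s). -/
/-- The tropical metric `d_tr(v,w) = max_i (v_i - w_i) - min_i (v_i - w_i)`. -/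
noncomputable def dtr {e : ℕ} (he : 0 < e) (v w : Fin e → ℝ) : ℝ :=
  letI : Nonempty (Fin e) := Fin.pos_iff_nonempty.mp he
  Finset.univ.sup' Finset.univ_nonempty (fun i => v i - w i) -
    Finset.univ.inf' Finset.univ_nonempty (fun i => v i - w i)

/-- The tropical convex hull of the points `v 0, …, v (s-1)` in `ℝ^e`. -/
def tconv {e s : ℕ} (hs : 0 < s) (v : Fin s → Fin e → ℝ) : Set (Fin e → ℝ) :=
  letI : Nonempty (Fin s) := Fin.pos_iff_nonempty.mp hs
  {x | ∃ a : Fin s → ℝ,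
    x = fun i => Finset.univ.sup' Finset.univ_nonempty (fun k => a k + v k i)}

/-- The tropical projection `π(x) = ⊕_k λ_k ⊙ v_k` with
`λ_k = min_j (x_j - v_k(j))`. -/
noncomputable def tproj {e s : ℕ} (he : 0 < e) (hs : 0 < s)
    (v : Fin s → Fin e → ℝ) (x : Fin e → ℝ) : Fin e → ℝ :=
  letI : Nonempty (Fin e) := Fin.pos_iff_nonempty.mp he
  letI : Nonempty (Fin s) := Fin.pos_iff_nonempty.mp hs
  fun i => Finset.univ.sup' Finset.univ_nonempty (fun k =>
    (Finset.univ.inf' Finset.univ_nonempty (fun j => x j - v k j)) + v k i)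

/-- The tropical projection lands in the tropical polytope and is a tropical
nearest-point map with respect to `d_tr`. -/
theorem tproj_mem_and_nearest {e s : ℕ} (he : 0 < e) (hs : 0 < s)
    (v : Fin s → Fin e → ℝ) (x : Fin e → ℝ) :
    tproj he hs v x ∈ tconv hs v ∧
      ∀ y ∈ tconv hs v, dtr he x (tproj he hs v x) ≤ dtr he x y := by
  haveI : Nonempty (Fin e) := Fin.pos_iff_nonempty.mp he
  haveI : Nonempty (Fin s) := Fin.pos_iff_nonempty.mp hs
  set lam : Fin s → ℝ := fun k =>
    Finset.univ.inf' Finset.univ_nonempty (fun j => x j - v k j) with hlam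
  set p : Fin e → ℝ := tproj he hs v x with hp
  have hpdef : ∀ i, p i = Finset.univ.sup' Finset.univ_nonempty
      (fun k => lam k + v k i) := fun i => rfl
  -- p ≤ x coordinatewise
  have hple : ∀ i, p i ≤ x i := by
    intro i
    rw [hpdef]
    apply Finset.sup'_le
    intro k _
    have : lam k ≤ x i - v k i :=
      Finset.inf'_le _ (Finset.mem_univ i)
    linarith
  -- lam k + v k i ≤ p i
  have hlamle : ∀ k i, lam k + v k i ≤ p i := by
    intro k i
    rw [hpdef]
    exact Finset.le_sup' (fun k => lam k + v k i) (Finset.mem_univ k)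
  -- min_j (x j - p j) = 0
  have hmin0 : Finset.univ.inf' Finset.univ_nonempty (fun j => x j - p j) = 0 := by
    obtain ⟨k0⟩ := ‹Nonempty (Fin s)›
    obtain ⟨j0, -, hj0⟩ := Finset.exists_mem_eq_inf' (α := ℝ)
      (Finset.univ_nonempty : (Finset.univ : Finset (Fin e)).Nonempty)
      (fun j : Fin e => x j - v k0 j : Fin e → ℝ)
    apply le_antisymm
    · have h1 : lam k0 = x j0 - v k0 j0 := hj0
      have h2 : lam k0 + v k0 j0 ≤ p j0 := hlamle k0 j0
      have h3 : x j0 - p j0 ≤ 0 := by linarith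
      exact le_trans (Finset.inf'_le _ (Finset.mem_univ j0)) h3
    · apply Finset.le_inf'
      intro j _
      have := hple j
      linarith
  constructor
  · exact ⟨lam, rfl⟩
  · rintro y ⟨a, rfl⟩
    set c : ℝ := Finset.univ.inf' Finset.univ_nonempty
      (fun i => x i - Finset.univ.sup' Finset.univ_nonempty (fun k => a k + v k i)) with hc
    -- c + a k ≤ lam k
    have hca : ∀ k, c + a k ≤ lam k := by
      intro k
      apply Finset.le_inf'
      intro j _
      have h1 : c ≤ x j - Finset.univ.sup' Finset.univ_nonempty (fun k => a k + v k j) :=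
        Finset.inf'_le _ (Finset.mem_univ j)
      have h2 : a k + v k j ≤ Finset.univ.sup' Finset.univ_nonempty (fun k => a k + v k j) :=
        Finset.le_sup' (fun k => a k + v k j) (Finset.mem_univ k)
      linarith
    -- c + y i ≤ p i
    have hcy : ∀ i, c + Finset.univ.sup' Finset.univ_nonempty (fun k => a k + v k i) ≤ p i := by
      intro i
      have : Finset.univ.sup' Finset.univ_nonempty (fun k => a k + v k i) ≤ p i - c := by
        apply Finset.sup'_le
        intro k _
        have h1 := hca k
        have h2 := hlamle k i
        linarith
      linarith
    unfold dtr
    rw [hmin0, sub_zero]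
    have hsup : Finset.univ.sup' Finset.univ_nonempty (fun j => x j - p j) ≤
        Finset.univ.sup' Finset.univ_nonempty
          (fun i => x i - Finset.univ.sup' Finset.univ_nonempty (fun k => a k + v k i)) - c := by
      apply Finset.sup'_le
      intro j _
      have h1 := hcy j
      have h2 : x j - Finset.univ.sup' Finset.univ_nonempty (fun k => a k + v k j) ≤
          Finset.univ.sup' Finset.univ_nonempty
            (fun i => x i - Finset.univ.sup' Finset.univ_nonempty (fun k => a k + v k i)) :=
        Finset.le_sup' (fun i => x i - Finset.univ.sup' Finset.univ_nonempty (fun k => a k + v k i)) (Finset.mem_univ j)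
      linarith
    exact hsup
end

section
/- The tropical projection onto a fixed tropical polytope is non-expansive with respect to the tropical metric: for v_1,...,v_s ∈ ℝ^e and π(x) = ⊕_{k=1}^s (min_j(x_j - v_k(j))) ⊙ v_k, one has d_tr(π(u), π(w)) ≤ d_tr(u, w) for all u, w ∈ ℝ^e. -/
lemma tproj_le {e s : ℕ} (he : 0 < e) (hs : 0 < s)
    (v : Fin s → Fin e → ℝ) (x y : Fin e → ℝ) (i : Fin e) :
    letI : Nonempty (Fin e) := Fin.pos_iff_nonempty.mp he
    tproj he hs v x i ≤ tproj he hs v y i +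
      Finset.univ.sup' Finset.univ_nonempty (fun j => x j - y j) := by
  letI : Nonempty (Fin e) := Fin.pos_iff_nonempty.mp he
  letI : Nonempty (Fin s) := Fin.pos_iff_nonempty.mp hs
  set M := Finset.univ.sup' Finset.univ_nonempty (fun j => x j - y j) with hM
  unfold tproj
  apply Finset.sup'_le
  intro k _
  have hk : Finset.univ.inf' Finset.univ_nonempty (fun j => x j - v k j) ≤
      Finset.univ.inf' Finset.univ_nonempty (fun j => y j - v k j) + M := by
    obtain ⟨j0, _, hj0⟩ := Finset.exists_mem_eq_inf' Finset.univ_nonempty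
      (fun j => y j - v k j)
    rw [hj0]
    have h1 : Finset.univ.inf' Finset.univ_nonempty (fun j => x j - v k j) ≤
        x j0 - v k j0 := Finset.inf'_le _ (Finset.mem_univ j0)
    have h2 : x j0 - y j0 ≤ M := Finset.le_sup' (fun j => x j - y j) (Finset.mem_univ j0)
    linarith
  have := Finset.le_sup' (f := fun k =>
      (Finset.univ.inf' Finset.univ_nonempty (fun j => y j - v k j)) + v k i)
      (Finset.mem_univ k)
  linarith

/-- The tropical projection onto a fixed tropical polytope is non-expansive
with respect to the tropical metric. -/
theorem tproj_nonexpansive {e s : ℕ} (he : 0 < e) (hs : 0 < s)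
    (v : Fin s → Fin e → ℝ) (u w : Fin e → ℝ) :
    dtr he (tproj he hs v u) (tproj he hs v w) ≤ dtr he u w := by
  letI : Nonempty (Fin e) := Fin.pos_iff_nonempty.mp he
  unfold dtr
  have hM : ∀ i, tproj he hs v u i - tproj he hs v w i ≤
      Finset.univ.sup' Finset.univ_nonempty (fun j => u j - w j) := by
    intro i
    have := tproj_le he hs v u w i
    linarith
  have hm : ∀ i, Finset.univ.inf' Finset.univ_nonempty (fun j => u j - w j) ≤
      tproj he hs v u i - tproj he hs v w i := by
    intro i
    have h1 := tproj_le he hs v w u i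
    have h2 : Finset.univ.sup' Finset.univ_nonempty (fun j => w j - u j) ≤
        -(Finset.univ.inf' Finset.univ_nonempty (fun j => u j - w j)) := by
      apply Finset.sup'_le
      intro j _
      have : Finset.univ.inf' Finset.univ_nonempty (fun j => u j - w j) ≤
          u j - w j := Finset.inf'_le _ (Finset.mem_univ j)
      linarith
    linarith
  have h1 : Finset.univ.sup' Finset.univ_nonempty
      (fun i => tproj he hs v u i - tproj he hs v w i) ≤
      Finset.univ.sup' Finset.univ_nonempty (fun j => u j - w j) :=
    Finset.sup'_le _ _ (fun i _ => hM i)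
  have h2 : Finset.univ.inf' Finset.univ_nonempty (fun j => u j - w j) ≤
      Finset.univ.inf' Finset.univ_nonempty
      (fun i => tproj he hs v u i - tproj he hs v w i) :=
    Finset.le_inf' _ _ (fun i _ => hm i)
  linarith
end

section
/- For points x and p in ℝ^e with no ties in x − p (i.e., all coordinates of x − p are distinct), the function y ↦ d_tr(p, y) is differentiable at x, and its partial derivative with respect to y_{l'} equals δ_{l',t} − δ_{l',t'}, where t is the unique index maximizing x_i − p_i and t' is the unique index minimizing x_i − p_i. -/
/-- If there are no ties in `x - p`, then `y ↦ d_tr(p, y)` is differentiable at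
`x` with derivative `h ↦ h t - h t'`, where `t` is the unique argmax and `t'`
the unique argmin of `x_i - p_i`; in particular the partial derivative in the
`l'`-th coordinate direction is `δ_{l',t} - δ_{l',t'}`. -/
theorem dtr_hasFDerivAt_of_no_ties {e : ℕ} (he : 0 < e) (p x : Fin e → ℝ)
    (hinj : Function.Injective (fun i => x i - p i))
    (t t' : Fin e)
    (ht : ∀ i, x i - p i ≤ x t - p t)
    (ht' : ∀ i, x t' - p t' ≤ x i - p i) :
    HasFDerivAt (fun y => dtr he y p)
      (ContinuousLinearMap.proj (R := ℝ) (φ := fun _ : Fin e => ℝ) t -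
        ContinuousLinearMap.proj (R := ℝ) (φ := fun _ : Fin e => ℝ) t') x ∧
    ∀ l' : Fin e,
      (ContinuousLinearMap.proj (R := ℝ) (φ := fun _ : Fin e => ℝ) t -
        ContinuousLinearMap.proj (R := ℝ) (φ := fun _ : Fin e => ℝ) t') (Pi.single l' 1) =
        (if l' = t then (1 : ℝ) else 0) - (if l' = t' then (1 : ℝ) else 0) := by
  have hne : Nonempty (Fin e) := Fin.pos_iff_nonempty.mp he
  constructor
  · -- eventual equality with the affine function
    have hg : HasFDerivAt (fun y : Fin e → ℝ => (y t - p t) - (y t' - p t'))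
        (ContinuousLinearMap.proj (R := ℝ) (φ := fun _ : Fin e => ℝ) t -
          ContinuousLinearMap.proj (R := ℝ) (φ := fun _ : Fin e => ℝ) t') x := by
      exact (((ContinuousLinearMap.proj (R := ℝ) (φ := fun _ : Fin e => ℝ) t).hasFDerivAt.sub_const
        (p t)).sub ((ContinuousLinearMap.proj (R := ℝ) (φ := fun _ : Fin e => ℝ) t').hasFDerivAt.sub_const (p t')))
    refine hg.congr_of_eventuallyEq ?_
    have hmax : ∀ᶠ y : Fin e → ℝ in nhds x, ∀ i, y i - p i ≤ y t - p t := by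
      rw [Filter.eventually_all]
      intro i
      by_cases hi : i = t
      · subst hi; exact Filter.Eventually.of_forall fun _ => le_refl _
      · have hlt : x i - p i < x t - p t := by
          rcases lt_or_eq_of_le (ht i) with h | h
          · exact h
          · exact absurd (hinj h) hi
        have hc1 : ContinuousAt (fun y : Fin e → ℝ => y i - p i) x :=
          (continuous_apply i).continuousAt.sub continuousAt_const
        have hc2 : ContinuousAt (fun y : Fin e → ℝ => y t - p t) x :=
          (continuous_apply t).continuousAt.sub continuousAt_const
        exact (hc1.eventually_lt hc2 hlt).mono fun y hy => le_of_lt hy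
    have hmin : ∀ᶠ y : Fin e → ℝ in nhds x, ∀ i, y t' - p t' ≤ y i - p i := by
      rw [Filter.eventually_all]
      intro i
      by_cases hi : i = t'
      · subst hi; exact Filter.Eventually.of_forall fun _ => le_refl _
      · have hlt : x t' - p t' < x i - p i := by
          rcases lt_or_eq_of_le (ht' i) with h | h
          · exact h
          · exact absurd (hinj h.symm) hi
        have hc1 : ContinuousAt (fun y : Fin e → ℝ => y t' - p t') x :=
          (continuous_apply t').continuousAt.sub continuousAt_const
        have hc2 : ContinuousAt (fun y : Fin e → ℝ => y i - p i) x :=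
          (continuous_apply i).continuousAt.sub continuousAt_const
        exact (hc1.eventually_lt hc2 hlt).mono fun y hy => le_of_lt hy
    filter_upwards [hmax, hmin] with y hy1 hy2
    have hs : Finset.univ.sup' Finset.univ_nonempty (fun i => y i - p i) = y t - p t :=
      le_antisymm (Finset.sup'_le _ _ fun i _ => hy1 i)
        (Finset.le_sup' (fun i => y i - p i) (Finset.mem_univ t))
    have hi : Finset.univ.inf' Finset.univ_nonempty (fun i => y i - p i) = y t' - p t' :=
      le_antisymm (Finset.inf'_le (fun i => y i - p i) (Finset.mem_univ t'))
        (Finset.le_inf' _ _ fun i _ => hy2 i)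
    simp only [dtr, hs, hi]
  · intro l'
    simp only [ContinuousLinearMap.sub_apply, ContinuousLinearMap.proj_apply,
      Pi.single_apply]
    split_ifs <;> subst_eqs <;> simp_all
end
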